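/- arXiv:1905.00166 — 2 statements merged into one kernel-verified Lean document; each statement's English description precedes it below -/
import Mathlib

section
/- Let n be a positive integer, α₁ ∈ ℝ with α₁ ∉ {0, −1}, and α₂ ∈ ℝ with α₂ ∉ {0, α₁}. Then for every pair of indices 1 ≤ i < j ≤ n, the matrix (e_i + α₂ e_j)(e_i + α₂ e_j)ᵀ does not belong to cone(B̄(α₁)). -/
open Matrix Finset

noncomputable section

/-- `e i` is the standard basis vector with a `1` in coordinate `i`. -/
def e {n : ℕ} (i : Fin n) : Fin n → ℝ := Pi.single i 1

/-- The positive semidefinite cone `S^n_+`. -/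
def PSDcone (n : ℕ) : Set (Matrix (Fin n) (Fin n) ℝ) :=
  {X | X.IsSymm ∧ ∀ d : Fin n → ℝ, 0 ≤ d ⬝ᵥ X.mulVec d}

/-- The set of diagonally dominant symmetric matrices `DD_n`. -/
def DD (n : ℕ) : Set (Matrix (Fin n) (Fin n) ℝ) :=
  {A | A.IsSymm ∧ ∀ i, ∑ j ∈ Finset.univ.erase i, |A i j| ≤ A i i}

/-- The set of scaled diagonally dominant symmetric matrices `SDD_n`. -/
def SDD (n : ℕ) : Set (Matrix (Fin n) (Fin n) ℝ) :=
  {A | A.IsSymm ∧ ∃ D : Fin n → ℝ, (∀ i, 0 < D i) ∧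
    Matrix.diagonal D * A * Matrix.diagonal D ∈ DD n}

/-- The conical hull of a set of matrices. -/
def coneHull {n : ℕ} (K : Set (Matrix (Fin n) (Fin n) ℝ)) :
    Set (Matrix (Fin n) (Fin n) ℝ) :=
  {X | ∃ (k : ℕ) (c : Fin k → ℝ) (M : Fin k → Matrix (Fin n) (Fin n) ℝ),
    (∀ i, 0 ≤ c i) ∧ (∀ i, M i ∈ K) ∧ X = ∑ i, c i • M i}

/-- The dual cone within `S^n` w.r.t. the trace inner product. -/
def dualCone {n : ℕ} (K : Set (Matrix (Fin n) (Fin n) ℝ)) :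
    Set (Matrix (Fin n) (Fin n) ℝ) :=
  {A | A.IsSymm ∧ ∀ B ∈ K, 0 ≤ Matrix.trace (Aᵀ * B)}

/-- The SD basis of Type I, as a set. -/
def Bplus (n : ℕ) : Set (Matrix (Fin n) (Fin n) ℝ) :=
  {M | ∃ i j : Fin n, i ≤ j ∧ M = vecMulVec (e i + e j) (e i + e j)}

/-- The SD basis of Type II, as a set. -/
def Bminus (n : ℕ) : Set (Matrix (Fin n) (Fin n) ℝ) :=
  {M | ∃ i : Fin n, M = vecMulVec (e i + e i) (e i + e i)} ∪
    {M | ∃ i j : Fin n, i < j ∧ M = vecMulVec (e i - e j) (e i - e j)}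

/-- The expanded SD basis matrix `B̄_{i,j}(α) = (e_i + α e_j)(e_i + α e_j)ᵀ`. -/
def Bbar {n : ℕ} (α : ℝ) (i j : Fin n) : Matrix (Fin n) (Fin n) ℝ :=
  vecMulVec (e i + α • e j) (e i + α • e j)

/-- The expanded SD basis `B̄(α)`, as a set. -/
def BbarSet (n : ℕ) (α : ℝ) : Set (Matrix (Fin n) (Fin n) ℝ) :=
  {M | ∃ i j : Fin n, i ≤ j ∧ M = Bbar α i j}

/-- The space `S^n` of symmetric matrices as a submodule. -/
def symmSubmodule (n : ℕ) : Submodule ℝ (Matrix (Fin n) (Fin n) ℝ) where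
  carrier := {A | A.IsSymm}
  add_mem' := fun {A B} hA hB => by
    simp only [Set.mem_setOf_eq, Matrix.IsSymm, Matrix.transpose_add] at *
    rw [hA, hB]
  zero_mem' := by simp [Matrix.IsSymm]
  smul_mem' := fun c A hA => by
    simp only [Set.mem_setOf_eq, Matrix.IsSymm, Matrix.transpose_smul] at *
    rw [hA]

/-- Index set for pairs `1 ≤ i ≤ j ≤ n`. -/
abbrev SymIdx (n : ℕ) := {p : Fin n × Fin n // p.1 ≤ p.2}

/-!
Separate the matrix from the cone by a linear functional. With `m = min (α₂², (α₁ - α₂)²) > 0`,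
the functional with `φ (v vᵀ) = (v_j - α₂ v_i)² - m v_i²` is nonnegative on every generator
`v = e_p + α₁ e_q` (`p ≤ q`): on the coordinates `(i, j)` such a `v` is `(v_i, 0)`, `(0, v_j)`
or `(1, α₁)`. So `φ ≥ 0` on the cone, while `φ = -m` at `v = e_i + α₂ e_j`.
-/

lemma coneHull_nonneg_of_nonneg {n : ℕ} {K : Set (Matrix (Fin n) (Fin n) ℝ)}
    (f : Matrix (Fin n) (Fin n) ℝ →ₗ[ℝ] ℝ) (hf : ∀ M ∈ K, 0 ≤ f M) :
    ∀ X ∈ coneHull K, 0 ≤ f X := by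
  rintro _ ⟨k, c, M, hc, hM, rfl⟩
  rw [map_sum]
  exact Finset.sum_nonneg fun t _ => by
    rw [map_smul, smul_eq_mul]
    exact mul_nonneg (hc t) (hf _ (hM t))

lemma e_apply {n : ℕ} (p q : Fin n) : e p q = if q = p then 1 else 0 := Pi.single_apply p 1 q

lemma e_add_smul_e_apply_left {n : ℕ} (α : ℝ) {i j : Fin n} (hij : i ≠ j) :
    (e i + α • e j) i = 1 := by
  simp [e_apply, hij]

lemma e_add_smul_e_apply_right {n : ℕ} (α : ℝ) {i j : Fin n} (hij : i ≠ j) :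
    (e i + α • e j) j = α := by
  simp [e_apply, hij.symm]

lemma e_add_smul_e_cases {n : ℕ} (α : ℝ) {i j p q : Fin n} (hij : i < j) (hpq : p ≤ q) :
    (e p + α • e q) j = 0 ∨ (e p + α • e q) i = 0 ∨
      ((e p + α • e q) i = 1 ∧ (e p + α • e q) j = α) := by
  by_cases hpi : p = i
  · subst hpi
    by_cases hqj : q = j
    · subst hqj
      exact Or.inr <| Or.inr
        ⟨e_add_smul_e_apply_left α hij.ne, e_add_smul_e_apply_right α hij.ne⟩
    · left
      simp [e_apply, hij.ne', Ne.symm hqj]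
  · by_cases hqi : q = i
    · have hpj : p ≠ j := fun h => hij.not_ge (h ▸ hqi ▸ hpq)
      left
      simp [e_apply, hqi, hij.ne', Ne.symm hpj]
    · right; left
      simp [e_apply, Ne.symm hpi, Ne.symm hqi]

def pairFunctional {n : ℕ} (i j : Fin n) (a m : ℝ) : Matrix (Fin n) (Fin n) ℝ →ₗ[ℝ] ℝ where
  toFun X := X j j - a * (X i j + X j i) + (a ^ 2 - m) * X i i
  map_add' X Y := by simp only [Matrix.add_apply]; ring
  map_smul' c X := by simp only [Matrix.smul_apply, smul_eq_mul, RingHom.id_apply]; ring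

lemma pairFunctional_vecMulVec {n : ℕ} (i j : Fin n) (a m : ℝ) (v : Fin n → ℝ) :
    pairFunctional i j a m (vecMulVec v v) = (v j - a * v i) ^ 2 - m * v i ^ 2 := by
  simp only [pairFunctional, LinearMap.coe_mk, AddHom.coe_mk, vecMulVec_apply]
  ring

lemma pairFunctional_Bbar_nonneg {n : ℕ} {α a m : ℝ} {i j : Fin n} (hij : i < j)
    (hm_left : m ≤ a ^ 2) (hm_right : m ≤ (α - a) ^ 2) :
    ∀ M ∈ BbarSet n α, 0 ≤ pairFunctional i j a m M := by
  rintro _ ⟨p, q, hpq, rfl⟩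
  rw [Bbar, pairFunctional_vecMulVec, sub_nonneg]
  rcases e_add_smul_e_cases α hij hpq with hj | hi | ⟨hi, hj⟩
  · rw [hj, zero_sub, neg_sq, mul_pow]
    exact mul_le_mul_of_nonneg_right hm_left (sq_nonneg _)
  · rw [hi, zero_pow two_ne_zero, mul_zero]
    exact sq_nonneg _
  · rw [hi, hj]
    linarith

theorem stmt12_general (n : ℕ) (α₁ α₂ : ℝ)
    (h3 : α₂ ≠ 0) (h4 : α₂ ≠ α₁)
    (i j : Fin n) (hij : i < j) :
    vecMulVec (e i + α₂ • e j) (e i + α₂ • e j) ∉ coneHull (BbarSet n α₁) := by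
  set m := min (α₂ ^ 2) ((α₁ - α₂) ^ 2)
  have hm_pos : 0 < m := lt_min (by positivity) (by have := sub_ne_zero.2 h4.symm; positivity)
  intro hmem
  have hnonneg := coneHull_nonneg_of_nonneg (pairFunctional i j α₂ m)
    (pairFunctional_Bbar_nonneg hij (min_le_left _ _) (min_le_right _ _)) _ hmem
  rw [pairFunctional_vecMulVec, e_add_smul_e_apply_left α₂ hij.ne,
    e_add_smul_e_apply_right α₂ hij.ne] at hnonneg
  linarith

/-- for `α₁ ∉ {0, -1}` and `α₂ ∉ {0, α₁}`, the matrix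
`(e_i + α₂ e_j)(e_i + α₂ e_j)ᵀ` does not belong to `cone(B̄(α₁))`. -/
theorem stmt12 (n : ℕ) (hn : 0 < n) (α₁ α₂ : ℝ)
    (h1 : α₁ ≠ 0) (h2 : α₁ ≠ -1) (h3 : α₂ ≠ 0) (h4 : α₂ ≠ α₁)
    (i j : Fin n) (hij : i < j) :
    vecMulVec (e i + α₂ • e j) (e i + α₂ • e j) ∉ coneHull (BbarSet n α₁) :=
  stmt12_general n α₁ α₂ h3 h4 i j hij
end
end

section
/- For every positive integer n, cone(⋃_{α ∈ ℝ} B̄(α)) = SDD_n: the conical hull of the union over all real parameters α of the expanded SD bases equals the set of scaled diagonally dominant symmetric matrices. -/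
/-!
Every generator `(e i + α e j)(e i + α e j)ᵀ` is `v vᵀ` with `v` supported on two coordinates,
and such a matrix has a positive semidefinite comparison matrix (diagonal `A i i`, off-diagonal
entries `-|A i j|`). Since `|a + b| ≤ |a| + |b|`, the quadratic form of the comparison matrix is
superadditive on nonnegative vectors, so every `X` in the cone has a positive semidefinite
comparison matrix `M`. A positive semidefinite matrix with nonpositive off-diagonal entries
admits a positive `x` with `M x ≥ 0` (take `x = M⁻¹ 1` if `M` is invertible; otherwise a kernel
vector can be taken nonnegative and one recurses on its zero set), and `diag x` scales `X` into
`DD_n`.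

Conversely a diagonally dominant matrix is an explicit nonnegative combination of `e i e iᵀ` and
`(e i ± e j)(e i ± e j)ᵀ`, and the cone is stable under `X ↦ D X D` for diagonal `D`, because
`D (v vᵀ) D = (D v)(D v)ᵀ` and `D v` has the same support as `v`.
-/

open Matrix Finset

noncomputable section

open SignType

namespace Matrix

section ZMatrix

variable {ι : Type*} [Fintype ι]

theorem dotProduct_mulVec_mono {A B : Matrix ι ι ℝ} (h : ∀ i j, A i j ≤ B i j) {z : ι → ℝ}
    (hz : 0 ≤ z) : z ⬝ᵥ A *ᵥ z ≤ z ⬝ᵥ B *ᵥ z := by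
  simp only [dotProduct, mulVec]
  exact Finset.sum_le_sum fun i _ ↦ mul_le_mul_of_nonneg_left
    (Finset.sum_le_sum fun j _ ↦ mul_le_mul_of_nonneg_right (h i j) (hz j)) (hz i)

variable {M : Matrix ι ι ℝ}

theorem abs_dotProduct_mulVec_abs_le (hZ : ∀ i j, i ≠ j → M i j ≤ 0) (y : ι → ℝ) :
    |y| ⬝ᵥ M *ᵥ |y| ≤ y ⬝ᵥ M *ᵥ y := by
  simp only [dotProduct, mulVec, Finset.mul_sum, Pi.abs_apply]
  refine Finset.sum_le_sum fun i _ ↦ Finset.sum_le_sum fun j _ ↦ ?_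
  obtain rfl | hij := eq_or_ne i j
  · rw [mul_left_comm, abs_mul_abs_self]
    exact le_of_eq (by ring)
  · have : y i * y j ≤ |y i| * |y j| := by rw [← abs_mul]; exact le_abs_self _
    nlinarith [hZ i j hij]

theorem apply_eq_zero_of_mulVec_eq_zero (hZ : ∀ i j, i ≠ j → M i j ≤ 0) {w : ι → ℝ}
    (hw : 0 ≤ w) (hMw : M *ᵥ w = 0) {i j : ι} (hi : w i = 0) (hj : w j ≠ 0) : M i j = 0 := by
  have hterm : ∀ k ∈ Finset.univ, M i k * w k ≤ 0 := fun k _ ↦ by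
    obtain rfl | hik := eq_or_ne i k
    · simp [hi]
    · exact mul_nonpos_of_nonpos_of_nonneg (hZ i k hik) (hw k)
  have := (Finset.sum_eq_zero_iff_of_nonpos hterm).mp (congrFun hMw i) j (Finset.mem_univ j)
  exact (mul_eq_zero.mp this).resolve_right hj

theorem PosSemidef.of_isSymm_of_nonneg (hM : M.IsSymm) (hZ : ∀ i j, i ≠ j → M i j ≤ 0)
    (h : ∀ z, 0 ≤ z → 0 ≤ z ⬝ᵥ M *ᵥ z) : M.PosSemidef :=
  .of_dotProduct_mulVec_nonneg hM fun y ↦ by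
    simpa only [star_trivial] using
      (h |y| (abs_nonneg y)).trans (abs_dotProduct_mulVec_abs_le hZ y)

theorem PosSemidef.mulVec_abs_eq_zero (hM : M.PosSemidef) (hZ : ∀ i j, i ≠ j → M i j ≤ 0)
    {u : ι → ℝ} (hu : M *ᵥ u = 0) : M *ᵥ |u| = 0 := by
  have h := hM.dotProduct_mulVec_zero_iff |u|
  simp only [star_trivial] at h
  refine h.mp (le_antisymm ?_ (by simpa using hM.dotProduct_mulVec_nonneg |u|))
  simpa [hu] using abs_dotProduct_mulVec_abs_le hZ u

theorem PosSemidef.pos_of_mulVec_pos (hM : M.PosSemidef) (hZ : ∀ i j, i ≠ j → M i j ≤ 0)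
    {x : ι → ℝ} (hx : ∀ i, 0 < (M *ᵥ x) i) (i : ι) : 0 < x i := by
  classical
  have hx_nonneg : 0 ≤ x := by
    by_contra hneg
    -- `x⁻ ⬝ᵥ M *ᵥ x` is positive, but it is `x⁻ ⬝ᵥ M *ᵥ x⁺ - x⁻ ⬝ᵥ M *ᵥ x⁻ ≤ 0`.
    have hpos : 0 < x⁻ ⬝ᵥ M *ᵥ x := by
      obtain ⟨k, hk⟩ : ∃ k, x k < 0 := by simpa [Pi.le_def] using hneg
      refine Finset.sum_pos' (fun j _ ↦ mul_nonneg (negPart_nonneg _) (hx j).le)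
        ⟨k, Finset.mem_univ _, mul_pos ?_ (hx k)⟩
      simpa [Pi.negPart_apply] using hk
    have hcross : x⁻ ⬝ᵥ M *ᵥ x⁺ ≤ 0 := by
      simp only [dotProduct, mulVec, Finset.mul_sum]
      refine Finset.sum_nonpos fun j _ ↦ Finset.sum_nonpos fun k _ ↦ ?_
      obtain rfl | hjk := eq_or_ne j k
      · rcases le_total 0 (x j) with h | h
        · simp [Pi.negPart_apply, negPart_eq_zero.mpr h]
        · simp [Pi.posPart_apply, posPart_eq_zero.mpr h]
      · exact mul_nonpos_of_nonneg_of_nonpos (negPart_nonneg _)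
          (mul_nonpos_of_nonpos_of_nonneg (hZ j k hjk) (posPart_nonneg _))
    have hsq := hM.dotProduct_mulVec_nonneg x⁻
    rw [star_trivial] at hsq
    have : x⁻ ⬝ᵥ M *ᵥ x = x⁻ ⬝ᵥ M *ᵥ x⁺ - x⁻ ⬝ᵥ M *ᵥ x⁻ := by
      rw [← dotProduct_sub, ← mulVec_sub, posPart_sub_negPart]
    linarith
  refine (hx_nonneg i).lt_of_ne fun hxi ↦ (hx i).not_ge ?_
  refine Finset.sum_nonpos fun j _ ↦ ?_
  obtain rfl | hij := eq_or_ne i j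
  · simp [← hxi]
  · exact mul_nonpos_of_nonpos_of_nonneg (hZ i j hij) (hx_nonneg j)

theorem PosSemidef.exists_pos_mulVec_nonneg [DecidableEq ι] (hM : M.PosSemidef)
    (hZ : ∀ i j, i ≠ j → M i j ≤ 0) : ∃ x : ι → ℝ, (∀ i, 0 < x i) ∧ 0 ≤ M *ᵥ x := by
  classical
  induction h : Fintype.card ι using Nat.strong_induction_on generalizing ι with
  | _ n ih =>
  by_cases hdet : M.det = 0
  · obtain ⟨u, hu, hMu⟩ := exists_mulVec_eq_zero_iff.mpr hdet
    have hMw : M *ᵥ |u| = 0 := hM.mulVec_abs_eq_zero hZ hMu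
    -- `M *ᵥ |u| = 0` with `|u| ≥ 0` forces `M i j = 0` whenever `u i = 0 ≠ u j`, so `|u|` plus
    -- a positive solution on the zero set `T` of `u` (induction hypothesis) does the job.
    let T := {i // u i = 0}
    obtain ⟨i₀, hi₀⟩ : ∃ i, u i ≠ 0 := by simpa [funext_iff] using hu
    obtain ⟨y, hy, hMy⟩ := ih _ (h ▸ Fintype.card_subtype_lt hi₀)
      (hM.submatrix ((↑) : T → ι)) (fun i j hij ↦ hZ i j (Subtype.coe_injective.ne hij)) rfl
    let y' : ι → ℝ := fun i ↦ if hi : u i = 0 then y ⟨i, hi⟩ else 0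
    refine ⟨|u| + y', fun i ↦ ?_, ?_⟩
    · by_cases hi : u i = 0
      · simpa [y', hi] using hy ⟨i, hi⟩
      · simp [y', hi]
    · rw [mulVec_add, hMw, zero_add]
      intro i
      have hsplit : (M *ᵥ y') i = ∑ j : T, M i j * y j := by
        simp only [mulVec, dotProduct]
        rw [← Fintype.sum_subtype_add_sum_subtype (fun j ↦ u j = 0)]
        have hout : ∀ j : {j // u j ≠ 0}, M i j * y' j = 0 := fun j ↦ by simp [y', j.2]
        simp only [hout, Finset.sum_const_zero, add_zero]
        exact Finset.sum_congr rfl fun j _ ↦ by simp [y', j.2]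
      rw [Pi.zero_apply, hsplit]
      by_cases hi : u i = 0
      · exact hMy ⟨i, hi⟩
      · refine (Finset.sum_eq_zero fun j _ ↦ ?_).ge
        rw [← hM.isHermitian.apply, apply_eq_zero_of_mulVec_eq_zero hZ (abs_nonneg u) hMw
          (abs_eq_zero.mpr j.2) (abs_ne_zero.mpr hi), star_zero, zero_mul]
  · refine ⟨M⁻¹ *ᵥ 1, hM.pos_of_mulVec_pos hZ fun i ↦ ?_, ?_⟩ <;>
      rw [mulVec_mulVec, mul_nonsing_inv _ (isUnit_iff_ne_zero.mpr hdet), one_mulVec]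
    · exact one_pos
    · exact zero_le_one

end ZMatrix

section Comparison

variable {ι : Type*} [DecidableEq ι]

def comparison (A : Matrix ι ι ℝ) : Matrix ι ι ℝ :=
  of fun i j ↦ if i = j then A i i else -|A i j|

theorem comparison_apply_of_ne (A : Matrix ι ι ℝ) {i j : ι} (hij : i ≠ j) :
    comparison A i j = -|A i j| := if_neg hij

theorem comparison_nonpos_of_ne (A : Matrix ι ι ℝ) {i j : ι} (hij : i ≠ j) :
    comparison A i j ≤ 0 := by
  rw [comparison_apply_of_ne A hij]
  exact neg_nonpos.mpr (abs_nonneg _)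

theorem IsSymm.comparison {A : Matrix ι ι ℝ} (hA : A.IsSymm) : A.comparison.IsSymm := by
  ext i j
  simp only [Matrix.comparison, transpose_apply, of_apply, hA.apply i j, eq_comm]
  split_ifs with h <;> simp [h]

theorem comparison_mulVec_apply [Fintype ι] (A : Matrix ι ι ℝ) (x : ι → ℝ) (i : ι) :
    (A.comparison *ᵥ x) i = A i i * x i - ∑ j ∈ univ.erase i, |A i j| * x j := by
  rw [mulVec, dotProduct, ← Finset.add_sum_erase _ _ (mem_univ i), sub_eq_add_neg,
    ← Finset.sum_neg_distrib]
  congr 1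
  · simp [Matrix.comparison]
  · exact Finset.sum_congr rfl fun j hj ↦ by
      rw [comparison_apply_of_ne A (Finset.ne_of_mem_erase hj).symm, neg_mul]

theorem add_dotProduct_comparison_mulVec_le [Fintype ι] (A B : Matrix ι ι ℝ) {z : ι → ℝ}
    (hz : 0 ≤ z) :
    z ⬝ᵥ A.comparison *ᵥ z + z ⬝ᵥ B.comparison *ᵥ z ≤ z ⬝ᵥ (A + B).comparison *ᵥ z := by
  rw [← dotProduct_add, ← add_mulVec]
  refine dotProduct_mulVec_mono (fun i j ↦ ?_) hz
  obtain rfl | hij := eq_or_ne i j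
  · simp [Matrix.comparison]
  · simp only [add_apply, comparison_apply_of_ne _ hij]
    linarith [abs_add_le (A i j) (B i j)]

theorem comparison_smul (A : Matrix ι ι ℝ) {c : ℝ} (hc : 0 ≤ c) :
    (c • A).comparison = c • A.comparison := by
  ext i j
  obtain rfl | hij := eq_or_ne i j
  · simp [Matrix.comparison]
  · simp [comparison_apply_of_ne _ hij, abs_mul, abs_of_nonneg hc]

end Comparison

end Matrix

section Cone

variable {n : ℕ}

theorem coneHull_eq_hull (K : Set (Matrix (Fin n) (Fin n) ℝ)) :
    coneHull K = PointedCone.hull ℝ K := by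
  ext X
  rw [SetLike.mem_coe, Submodule.mem_span_set']
  constructor
  · rintro ⟨k, c, M, hc, hM, rfl⟩
    exact ⟨k, fun i ↦ ⟨c i, hc i⟩, fun i ↦ ⟨M i, hM i⟩, rfl⟩
  · rintro ⟨k, c, M, rfl⟩
    exact ⟨k, fun i ↦ c i, fun i ↦ M i, fun i ↦ (c i).2, fun i ↦ (M i).2, rfl⟩

abbrev sdCone (n : ℕ) : PointedCone ℝ (Matrix (Fin n) (Fin n) ℝ) :=
  PointedCone.hull ℝ (⋃ α : ℝ, BbarSet n α)

theorem isSymm_Bbar (α : ℝ) (i j : Fin n) : (Bbar α i j).IsSymm :=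
  transpose_vecMulVec _ _

theorem comparison_Bbar_of_lt (α : ℝ) {i j : Fin n} (hij : i < j) :
    (Bbar α i j).comparison = vecMulVec (e i - |α| • e j) (e i - |α| • e j) := by
  ext k l
  simp only [comparison, Bbar, of_apply, vecMulVec_apply, e, Pi.add_apply, Pi.sub_apply,
    Pi.smul_apply, Pi.single_apply, smul_eq_mul]
  have := hij.ne
  split_ifs <;> subst_vars <;> simp_all [abs_mul_abs_self]

theorem comparison_Bbar_self (α : ℝ) (i : Fin n) : (Bbar α i i).comparison = Bbar α i i := by
  ext k l
  obtain rfl | hkl := eq_or_ne k l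
  · simp [comparison]
  · have h0 : Bbar α i i k l = 0 := by
      simp only [Bbar, vecMulVec_apply, e, Pi.add_apply, Pi.smul_apply, Pi.single_apply]
      split_ifs <;> simp_all
    rw [comparison_apply_of_ne _ hkl, h0, abs_zero, neg_zero]

theorem posSemidef_comparison_Bbar (α : ℝ) {i j : Fin n} (hij : i ≤ j) :
    (Bbar α i j).comparison.PosSemidef := by
  obtain hij | rfl := hij.lt_or_eq
  · simpa [comparison_Bbar_of_lt α hij] using posSemidef_vecMulVec_self_star (e i - |α| • e j)
  · rw [comparison_Bbar_self]
    simpa [Bbar] using posSemidef_vecMulVec_self_star (e i + α • e i)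

theorem isSymm_of_mem_sdCone {X : Matrix (Fin n) (Fin n) ℝ} (hX : X ∈ sdCone n) :
    X.IsSymm := by
  have hle : sdCone n ≤ (symmSubmodule n).restrictScalars _ :=
    Submodule.span_le.mpr fun M hM ↦ by
      obtain ⟨α, i, j, -, rfl⟩ := Set.mem_iUnion.mp hM
      exact isSymm_Bbar α i j
  exact hle hX

theorem dotProduct_comparison_mulVec_nonneg_of_mem_sdCone {X : Matrix (Fin n) (Fin n) ℝ}
    (hX : X ∈ sdCone n) {z : Fin n → ℝ} (hz : 0 ≤ z) : 0 ≤ z ⬝ᵥ X.comparison *ᵥ z := by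
  induction hX using Submodule.span_induction with
  | mem X hX =>
    obtain ⟨α, i, j, hij, rfl⟩ := Set.mem_iUnion.mp hX
    simpa using (posSemidef_comparison_Bbar α hij).dotProduct_mulVec_nonneg z
  | zero => simp [comparison, dotProduct, mulVec]
  | add X Y _ _ hX hY => exact (add_nonneg hX hY).trans (add_dotProduct_comparison_mulVec_le X Y hz)
  | smul c X _ hX =>
    rw [show c • X = (c : ℝ) • X from rfl, comparison_smul X c.2, smul_mulVec, dotProduct_smul]
    exact smul_nonneg c.2 hX

theorem mem_SDD_of_comparison_mulVec_nonneg {A : Matrix (Fin n) (Fin n) ℝ} (hA : A.IsSymm)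
    {x : Fin n → ℝ} (hx : ∀ i, 0 < x i) (hAx : 0 ≤ A.comparison *ᵥ x) : A ∈ SDD n := by
  refine ⟨hA, x, hx, ?_, fun i ↦ ?_⟩
  · simp [IsSymm, transpose_mul, hA.eq, Matrix.mul_assoc]
  · have hrow := hAx i
    rw [Pi.zero_apply, comparison_mulVec_apply, sub_nonneg] at hrow
    simp only [mul_diagonal, diagonal_mul, abs_mul, abs_of_pos (hx _)]
    calc ∑ j ∈ univ.erase i, x i * |A i j| * x j
        = x i * ∑ j ∈ univ.erase i, |A i j| * x j := by
          rw [Finset.mul_sum]; exact Finset.sum_congr rfl fun j _ ↦ mul_assoc _ _ _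
      _ ≤ x i * (A i i * x i) := mul_le_mul_of_nonneg_left hrow (hx i).le
      _ = x i * A i i * x i := (mul_assoc _ _ _).symm

theorem mem_SDD_of_mem_sdCone {X : Matrix (Fin n) (Fin n) ℝ} (hX : X ∈ sdCone n) :
    X ∈ SDD n := by
  have hsymm := isSymm_of_mem_sdCone hX
  have hZ : ∀ i j, i ≠ j → X.comparison i j ≤ 0 := fun _ _ ↦ X.comparison_nonpos_of_ne
  have hpsd : X.comparison.PosSemidef := .of_isSymm_of_nonneg hsymm.comparison hZ
    fun _ ↦ dotProduct_comparison_mulVec_nonneg_of_mem_sdCone hX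
  obtain ⟨x, hx, hXx⟩ := hpsd.exists_pos_mulVec_nonneg hZ
  exact mem_SDD_of_comparison_mulVec_nonneg hsymm hx hXx

theorem vecMulVec_smul_add_smul_mem_sdCone (i j : Fin n) (a b : ℝ) :
    vecMulVec (a • e i + b • e j) (a • e i + b • e j) ∈ sdCone n := by
  have hBbar : ∀ (c α : ℝ) (i j : Fin n), i ≤ j →
      vecMulVec (c • (e i + α • e j)) (c • (e i + α • e j)) ∈ sdCone n := fun c α i j hij ↦ by
    rw [smul_vecMulVec, vecMulVec_smul, smul_smul]
    exact Submodule.smul_mem _ (⟨c * c, mul_self_nonneg c⟩ : {r : ℝ // 0 ≤ r})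
      (PointedCone.subset_hull (Set.mem_iUnion.mpr ⟨α, i, j, hij, rfl⟩))
  wlog hij : i ≤ j generalizing i j a b
  · simpa only [add_comm] using this j i b a (le_of_not_ge hij)
  obtain rfl | ha := eq_or_ne a 0
  · simpa using hBbar b 0 j j le_rfl
  · convert hBbar a (b / a) i j hij using 2 <;> · rw [smul_add, smul_smul, mul_div_cancel₀ _ ha]

theorem diagonal_mul_mul_diagonal_mem_sdCone {X : Matrix (Fin n) (Fin n) ℝ} (hX : X ∈ sdCone n)
    (d : Fin n → ℝ) : diagonal d * X * diagonal d ∈ sdCone n := by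
  induction hX using Submodule.span_induction with
  | mem X hX =>
    obtain ⟨α, i, j, -, rfl⟩ := Set.mem_iUnion.mp hX
    convert vecMulVec_smul_add_smul_mem_sdCone i j (d i) (α * d j) using 1
    ext k l
    simp only [Bbar, mul_diagonal, diagonal_mul, vecMulVec_apply, e, Pi.add_apply,
      Pi.smul_apply, Pi.single_apply, smul_eq_mul]
    split_ifs <;> subst_vars <;> ring
  | zero => simp
  | add X Y _ _ hX hY => simpa [mul_add, add_mul] using add_mem hX hY
  | smul c X _ hX =>
    rw [show c • X = (c : ℝ) • X from rfl, Matrix.mul_smul, Matrix.smul_mul]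
    exact Submodule.smul_mem _ c hX

-- Each unordered pair `{i, j}` occurs twice in the second sum, hence the weight `|A i j| / 2`.
theorem Matrix.IsSymm.eq_sum_smul_vecMulVec {A : Matrix (Fin n) (Fin n) ℝ} (hA : A.IsSymm) :
    A = ∑ i, (A i i - ∑ j ∈ univ.erase i, |A i j|) • vecMulVec (e i) (e i) +
      ∑ i, ∑ j ∈ univ.erase i, (|A i j| / 2) •
        vecMulVec (e i + (sign (A i j) : ℝ) • e j) (e i + (sign (A i j) : ℝ) • e j) := by
  have hsign : ∀ x : ℝ, |x| / 2 * sign x = x / 2 := fun x ↦ by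
    rw [div_mul_eq_mul_div, abs_mul_sign]
  have hsign_sq : ∀ x : ℝ, |x| / 2 * (sign x * sign x) = |x| / 2 := fun x ↦ by
    rw [← mul_assoc, hsign, div_mul_eq_mul_div, mul_comm x, sign_mul_self]
  ext k l
  simp only [Matrix.add_apply, Matrix.sum_apply, Matrix.smul_apply, vecMulVec_apply, e,
    Pi.add_apply, Pi.smul_apply, Pi.single_apply, smul_eq_mul, mul_add, add_mul, mul_ite, ite_mul,
    mul_one, mul_zero, zero_mul, one_mul]
  simp [Finset.sum_ite_eq, hsign, hsign_sq]
  by_cases hkl : k = l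
  · subst hkl
    have hsymm : ∀ x, |A x k| = |A k x| := fun x ↦ by rw [hA.apply k x]
    simp +contextual [hsymm, Finset.sum_add_distrib]
    rw [← Finset.sum_div]
    ring
  · simp +contextual [hkl, Finset.sum_add_distrib, Finset.sum_ite_irrel]
    rw [hA.apply k l]
    ring

theorem mem_sdCone_of_mem_DD {A : Matrix (Fin n) (Fin n) ℝ} (hA : A ∈ DD n) : A ∈ sdCone n := by
  obtain ⟨hsymm, hdom⟩ := hA
  rw [hsymm.eq_sum_smul_vecMulVec]
  refine add_mem (sum_mem fun i _ ↦ ?_) (sum_mem fun i _ ↦ sum_mem fun j _ ↦ ?_)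
  · exact Submodule.smul_mem _ (⟨_, sub_nonneg.mpr (hdom i)⟩ : {r : ℝ // 0 ≤ r})
      (by simpa using vecMulVec_smul_add_smul_mem_sdCone i i 1 0)
  · exact Submodule.smul_mem _ (⟨|A i j| / 2, by positivity⟩ : {r : ℝ // 0 ≤ r})
      (by simpa using vecMulVec_smul_add_smul_mem_sdCone i j 1 (sign (A i j)))

theorem mem_sdCone_of_mem_SDD {A : Matrix (Fin n) (Fin n) ℝ} (hA : A ∈ SDD n) : A ∈ sdCone n := by
  obtain ⟨-, d, hd, hdd⟩ := hA
  have hA : A = diagonal d⁻¹ * (diagonal d * A * diagonal d) * diagonal d⁻¹ := by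
    ext i j
    simp only [mul_diagonal, diagonal_mul, Pi.inv_apply]
    field_simp [(hd i).ne', (hd j).ne']
  rw [hA]
  exact diagonal_mul_mul_diagonal_mem_sdCone (mem_sdCone_of_mem_DD hdd) _

end Cone

theorem stmt13_general (n : ℕ) :
    coneHull (⋃ α : ℝ, BbarSet n α) = SDD n := by
  rw [coneHull_eq_hull]
  exact Set.Subset.antisymm (fun X ↦ mem_SDD_of_mem_sdCone) (fun A ↦ mem_sdCone_of_mem_SDD)

/-- `cone(⋃_{α ∈ ℝ} B̄(α)) = SDD_n`. -/
theorem stmt13 (n : ℕ) (hn : 0 < n) :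
    coneHull (⋃ α : ℝ, BbarSet n α) = SDD n :=
  stmt13_general n
end
end
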